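/- Let 0 < α < 1/2 and let the relative revenue of any mining policy π be REV(π) = R₁(π)/(R₁(π)+R₂(π)), where in any epoch each block of the honest network that is excluded from the main chain (overridden) corresponds injectively to a distinct accepted block of the attacker. If per T rounds the attacker creates k_T blocks and the honest network creates l_T = T - k_T blocks, with k_T/T → α and l_T/T → 1-α almost surely, and the attacker's accepted blocks satisfy Σ r¹_t ≤ k_T while the honest accepted blocks satisfy Σ r²_t ≥ l_T - k_T, then limsup of the relative revenue is at most α/(1-α). -/

import Mathlib

open MeasureTheory Filter

/-!
Each overridden honest block is matched with an accepted attacker block, so after `T` rounds the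
attacker holds at most `k` main-chain blocks against at least `T - 2k` honest ones. The share
`a / (a + b)` increases in `a` and decreases in `b`, hence it is at most `k / (T - k)`, which is
`x / (1 - x)` evaluated at `x = k / T → α`.
-/

lemma div_add_le_div_sub {a b k n : ℝ} (ha : 0 ≤ a) (hb : 0 ≤ b) (hak : a ≤ k)
    (hb_ge : n - 2 * k ≤ b) (hkn : 2 * k < n) :
    a / (a + b) ≤ k / (n - k) := by
  rcases ha.eq_or_lt with rfl | ha_pos
  · simp only [zero_div]
    exact div_nonneg (by linarith) (by linarith)
  calc a / (a + b) ≤ k / (k + b) := by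
        rw [div_le_div_iff₀ (by positivity) (by linarith)]
        nlinarith
    _ ≤ k / (k + (n - 2 * k)) := by
        gcongr <;> linarith
    _ = k / (n - k) := by ring_nf

lemma tendsto_div_sub_self {x : ℕ → ℝ} {α : ℝ} (hα : α ≠ 1)
    (hx : Tendsto (fun n => x n / n) atTop (nhds α)) :
    Tendsto (fun n => x n / (n - x n)) atTop (nhds (α / (1 - α))) := by
  refine (hx.div (tendsto_const_nhds.sub hx) (sub_ne_zero.mpr hα.symm)).congr' ?_
  filter_upwards [eventually_ne_atTop 0] with n hn
  have hn' : (n : ℝ) ≠ 0 := Nat.cast_ne_zero.mpr hn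
  rw [Pi.div_apply, one_sub_div hn', div_div_div_cancel_right₀ hn']

lemma limsup_le_of_eventually_le_of_tendsto {ι : Type*} {l : Filter ι} [l.NeBot]
    {u v : ι → ℝ} {c : ℝ} (hu : ∀ i, 0 ≤ u i) (huv : u ≤ᶠ[l] v)
    (hv : Tendsto v l (nhds c)) :
    limsup u l ≤ c :=
  hv.limsup_eq ▸ limsup_le_limsup huv
    (isCoboundedUnder_le_of_eventually_le l (Eventually.of_forall hu)) hv.isBoundedUnder_le

theorem selfish_mining_revenue_upper_bound_general {Ω : Type*} [MeasurableSpace Ω]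
    (μ : Measure Ω)
    (α : ℝ) (hα : α < 1/2)
    (k : ℕ → Ω → ℕ)
    (r₁ r₂ : ℕ → Ω → ℝ)
    (hr₁ : ∀ t ω, 0 ≤ r₁ t ω) (hr₂ : ∀ t ω, 0 ≤ r₂ t ω)
    (hk : ∀ᵐ ω ∂μ, Tendsto (fun T => (k T ω : ℝ) / T) atTop (nhds α))
    (hub₁ : ∀ᵐ ω ∂μ, ∀ T, (∑ t ∈ Finset.range T, r₁ t ω) ≤ k T ω)
    (hlb₂ : ∀ᵐ ω ∂μ, ∀ T : ℕ,
      ((T : ℝ) - k T ω) - k T ω ≤ ∑ t ∈ Finset.range T, r₂ t ω) :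
    ∀ᵐ ω ∂μ,
      Filter.limsup (fun T => (∑ t ∈ Finset.range T, r₁ t ω) /
          ((∑ t ∈ Finset.range T, r₁ t ω) + (∑ t ∈ Finset.range T, r₂ t ω)))
        atTop ≤ α / (1 - α) := by
  filter_upwards [hk, hub₁, hlb₂] with ω hkω hub hlb
  have hS₁ (T : ℕ) : 0 ≤ ∑ t ∈ Finset.range T, r₁ t ω :=
    Finset.sum_nonneg fun t _ => hr₁ t ω
  have hS₂ (T : ℕ) : 0 ≤ ∑ t ∈ Finset.range T, r₂ t ω :=
    Finset.sum_nonneg fun t _ => hr₂ t ω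
  have honest_majority : ∀ᶠ T : ℕ in atTop, 2 * (k T ω : ℝ) < T := by
    filter_upwards [hkω.eventually (eventually_lt_nhds hα), eventually_gt_atTop 0] with T hT hT0
    rw [div_lt_iff₀ (Nat.cast_pos.mpr hT0)] at hT
    linarith
  refine limsup_le_of_eventually_le_of_tendsto
    (fun T => div_nonneg (hS₁ T) (add_nonneg (hS₁ T) (hS₂ T))) ?_
    (tendsto_div_sub_self (by linarith) hkω)
  filter_upwards [honest_majority] with T hT
  exact div_add_le_div_sub (hS₁ T) (hS₂ T) (hub T) (by linarith [hlb T]) hT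

/-- Upper bound on selfish mining revenue (Proposition 1).
If per T rounds the attacker creates k_T blocks and the honest network
l_T = T - k_T blocks, with k_T/T → α and l_T/T → 1-α almost surely
(0 < α < 1/2), the attacker's accepted rewards satisfy Σ_{t<T} r¹_t ≤ k_T and
the honest accepted rewards satisfy Σ_{t<T} r²_t ≥ l_T - k_T (each overridden
honest block corresponds injectively to an accepted attacker block), then
almost surely the limsup of the relative revenue
(Σ r¹)/(Σ r¹ + Σ r²) is at most α/(1-α). -/
theorem selfish_mining_revenue_upper_bound {Ω : Type*} [MeasurableSpace Ω]
    (μ : Measure Ω) [IsProbabilityMeasure μ]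
    (α : ℝ) (hα0 : 0 < α) (hα : α < 1/2)
    (k : ℕ → Ω → ℕ) (hkT : ∀ T ω, k T ω ≤ T)
    (r₁ r₂ : ℕ → Ω → ℝ)
    (hr₁ : ∀ t ω, 0 ≤ r₁ t ω) (hr₂ : ∀ t ω, 0 ≤ r₂ t ω)
    (hk : ∀ᵐ ω ∂μ, Tendsto (fun T => (k T ω : ℝ) / T) atTop (nhds α))
    (hl : ∀ᵐ ω ∂μ, Tendsto (fun T : ℕ => ((T : ℝ) - k T ω) / T) atTop (nhds (1 - α)))
    (hub₁ : ∀ᵐ ω ∂μ, ∀ T, (∑ t ∈ Finset.range T, r₁ t ω) ≤ k T ω)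
    (hlb₂ : ∀ᵐ ω ∂μ, ∀ T : ℕ,
      ((T : ℝ) - k T ω) - k T ω ≤ ∑ t ∈ Finset.range T, r₂ t ω) :
    ∀ᵐ ω ∂μ,
      Filter.limsup (fun T => (∑ t ∈ Finset.range T, r₁ t ω) /
          ((∑ t ∈ Finset.range T, r₁ t ω) + (∑ t ∈ Finset.range T, r₂ t ω)))
        atTop ≤ α / (1 - α) :=
  selfish_mining_revenue_upper_bound_general μ α hα k r₁ r₂ hr₁ hr₂ hk hub₁ hlb₂
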